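/- arXiv:2102.12752 — 2 statements merged into one kernel-verified Lean document; each statement's English description precedes it below -/
import Mathlib

section
/- Let 1 < α ≤ 2, c_α = max{(α-1)/α, sqrt((2-α)/α)}, and t_α = (1/(α c_α))^{1/(α-1)}. Then for all x with 0 ≤ x ≤ t_α, we have 1 - x + c_α x^α > 0. -/
/-! By the choice of `t` we have `α c t^(α-1) = 1`, so `t` is where the convex function
`x ↦ 1 - x + c x^α` attains its minimum `1 - (α-1) t / α` on `[0, ∞)` (tangent line at `t`).
That minimum is positive iff `((α-1)/α)^(α-1) < α c`. Bernoulli's inequality bounds the left side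
by `1/α`, and `1 < α² c`: if `α(α-1) > 1` this is the first branch of the maximum, otherwise
`α² ≤ α + 1` forces `α³(2-α) > 1`, which is the second branch squared. -/

open Real

lemma rpow_tangent_le {p t x : ℝ} (hp : 1 ≤ p) (ht : 0 < t) (hx : 0 ≤ x) :
    t ^ p + p * t ^ (p - 1) * (x - t) ≤ x ^ p := by
  have hbern := one_add_mul_self_le_rpow_one_add (s := x / t - 1)
    (by linarith [div_nonneg hx ht.le]) hp
  rw [add_sub_cancel, div_rpow hx ht.le, le_div_iff₀ (rpow_pos_of_pos ht p)] at hbern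
  calc t ^ p + p * t ^ (p - 1) * (x - t) = (1 + p * (x / t - 1)) * t ^ p := by
        rw [rpow_sub_one ht.ne']; field_simp
    _ ≤ x ^ p := hbern

lemma div_rpow_sub_one_le_inv {α : ℝ} (h1 : 1 ≤ α) (h2 : α ≤ 2) :
    ((α - 1) / α) ^ (α - 1) ≤ α⁻¹ := by
  have hα : 0 < α := by linarith
  have hbern := rpow_one_add_le_one_add_mul_self (s := -α⁻¹)
    (by linarith [inv_le_one_of_one_le₀ h1]) (p := α - 1) (by linarith) (by linarith)
  calc ((α - 1) / α) ^ (α - 1) = (1 + -α⁻¹) ^ (α - 1) := by congr 1; field_simp; ring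
    _ ≤ 1 + (α - 1) * -α⁻¹ := hbern
    _ = α⁻¹ := by field_simp; ring

lemma one_lt_mul_mul_max_div_sqrt {α : ℝ} (h1 : 1 < α) :
    1 < α * (α * max ((α - 1) / α) (√((2 - α) / α))) := by
  have hα : 0 < α := by linarith
  rcases lt_or_ge 1 (α * (α - 1)) with hbig | hsmall
  · calc 1 < α * (α * ((α - 1) / α)) := by field_simp; linarith
      _ ≤ α * (α * max ((α - 1) / α) (√((2 - α) / α))) := by gcongr; exact le_max_left _ _
  · set y := √((2 - α) / α)
    have hy : α * y ^ 2 = 2 - α := by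
      rw [sq_sqrt (div_nonneg (by nlinarith) hα.le)]; field_simp
    have hcube : 1 < α ^ 3 * (2 - α) := by
      have hpos : 0 < 1 - α * (α * (α - 1) - 1) := by nlinarith
      nlinarith [mul_pos (sub_pos.2 h1) hpos]
    have hsq : (α * (α * y)) ^ 2 = α ^ 3 * (2 - α) := by rw [← hy]; ring
    have hbranch : 1 < α * (α * y) := by
      nlinarith [mul_nonneg hα.le (mul_nonneg hα.le (sqrt_nonneg ((2 - α) / α)))]
    exact hbranch.trans_le (by gcongr; exact le_max_right _ _)

lemma mul_rpow_one_div_lt_one {s a u : ℝ} (hs : 0 ≤ s) (ha : 0 < a) (hu : 0 < u)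
    (h : s ^ u < a) : s * (1 / a) ^ (1 / u) < 1 := by
  have hpos : 0 ≤ (1 / a) ^ (1 / u) := rpow_nonneg (by positivity) _
  rw [← rpow_lt_one_iff' (mul_nonneg hs hpos) hu, mul_rpow hs hpos, ← rpow_mul (by positivity),
    one_div_mul_cancel hu.ne', rpow_one, ← div_eq_mul_one_div, div_lt_one ha]
  exact h

theorem psi_arg_pos_general (α : ℝ) (h1 : 1 < α) (h2 : α ≤ 2)
    (c : ℝ) (hc : c = max ((α - 1) / α) (Real.sqrt ((2 - α) / α)))
    (t : ℝ) (ht : t = (1 / (α * c)) ^ (1 / (α - 1)))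
    (x : ℝ) (hx0 : 0 ≤ x) :
    0 < 1 - x + c * x ^ α := by
  have hα : 0 < α := by linarith
  have hu : 0 < α - 1 := by linarith
  have hc0 : 0 < c := hc ▸ lt_max_of_lt_left (by positivity)
  have ht0 : 0 < t := ht ▸ by positivity
  have hslope : α * c * t ^ (α - 1) = 1 := by
    rw [ht, ← rpow_mul (by positivity), one_div_mul_cancel hu.ne', rpow_one]
    field_simp
  have hcrux : ((α - 1) / α) ^ (α - 1) < α * c :=
    (div_rpow_sub_one_le_inv h1.le h2).trans_lt <| by
      rw [inv_lt_iff_one_lt_mul₀' hα]; exact hc ▸ one_lt_mul_mul_max_div_sqrt h1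
  have hmin : (α - 1) / α * t < 1 :=
    ht ▸ mul_rpow_one_div_lt_one (by positivity) (by positivity) hu hcrux
  calc 0 < 1 - (α - 1) / α * t := by linarith
    _ = 1 - x + c * (t ^ α + α * t ^ (α - 1) * (x - t)) := by
      rw [rpow_sub_one ht0.ne'] at hslope ⊢
      field_simp at hslope ⊢
      linear_combination (t * (α - 1) - x * α) * hslope
    _ ≤ 1 - x + c * x ^ α := by gcongr; exact rpow_tangent_le h1.le ht0 hx0

theorem psi_arg_pos (α : ℝ) (h1 : 1 < α) (h2 : α ≤ 2)
    (c : ℝ) (hc : c = max ((α - 1) / α) (Real.sqrt ((2 - α) / α)))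
    (t : ℝ) (ht : t = (1 / (α * c)) ^ (1 / (α - 1)))
    (x : ℝ) (hx0 : 0 ≤ x) (hxt : x ≤ t) :
    0 < 1 - x + c * x ^ α :=
  psi_arg_pos_general α h1 h2 c hc t ht x hx0
end

section
/- Let 1 < α ≤ 2 and c_α ≥ max{(α-1)/α, sqrt((2-α)/α)}. Then for all real x, we have -log(1 - x + c_α|x|^α) ≤ log(1 + x + c_α|x|^α), provided both arguments of the logarithms are positive. -/
theorem neg_log_le_log (α : ℝ) (h1 : 1 < α) (h2 : α ≤ 2)
    (c : ℝ) (hc : max ((α - 1) / α) (Real.sqrt ((2 - α) / α)) ≤ c)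
    (x : ℝ) (hpos1 : 0 < 1 - x + c * |x| ^ α) (hpos2 : 0 < 1 + x + c * |x| ^ α) :
    -Real.log (1 - x + c * |x| ^ α) ≤ Real.log (1 + x + c * |x| ^ α) := by
  have hα : (0:ℝ) < α := by linarith
  have hθ1 : (0:ℝ) ≤ (2 - α) / α := div_nonneg (by linarith) hα.le
  have hθ2 : (0:ℝ) ≤ (2 * α - 2) / α := div_nonneg (by linarith) hα.le
  have hc1 : (α - 1) / α ≤ c := le_trans (le_max_left _ _) hc
  have hc0 : 0 ≤ c := le_trans (Real.sqrt_nonneg _) (le_trans (le_max_right _ _) hc)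
  have hc2 : (2 - α) / α ≤ c ^ 2 := by
    nlinarith [Real.sq_sqrt hθ1, le_trans (le_max_right _ _) hc,
      Real.sqrt_nonneg ((2 - α) / α)]
  have ht0 : (0:ℝ) ≤ |x| := abs_nonneg x
  have key : x ^ 2 ≤ c ^ 2 * (|x| ^ α) ^ 2 + 2 * c * |x| ^ α := by
    rcases eq_or_lt_of_le ht0 with h0 | h0
    · have : x = 0 := abs_eq_zero.mp h0.symm
      subst this
      simp
      positivity
    · have hg := Real.geom_mean_le_arith_mean2_weighted hθ1 hθ2
        (Real.rpow_nonneg ht0 (2 * α)) (Real.rpow_nonneg ht0 α)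
        (by field_simp; ring)
      have e1 : (|x| ^ (2 * α)) ^ ((2 - α) / α) * (|x| ^ α) ^ ((2 * α - 2) / α)
          = x ^ 2 := by
        rw [← sq_abs x, ← Real.rpow_natCast |x| 2, ← Real.rpow_mul ht0,
          ← Real.rpow_mul ht0, ← Real.rpow_add h0]
        congr 1
        push_cast
        field_simp
        ring
      rw [e1] at hg
      have e2 : |x| ^ (2 * α) = (|x| ^ α) ^ 2 := by
        rw [← Real.rpow_natCast (|x| ^ α) 2, ← Real.rpow_mul ht0]
        norm_num
        ring_nf
      rw [e2] at hg
      have hT := Real.rpow_nonneg ht0 α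
      have a1 : (2 - α) / α * (|x| ^ α) ^ 2 ≤ c ^ 2 * (|x| ^ α) ^ 2 :=
        mul_le_mul_of_nonneg_right hc2 (sq_nonneg _)
      have a2 : (2 * α - 2) / α * |x| ^ α ≤ 2 * c * |x| ^ α := by
        have he : (2 * α - 2) / α = 2 * ((α - 1) / α) := by ring
        nlinarith
      linarith
  have hprod : 1 ≤ (1 - x + c * |x| ^ α) * (1 + x + c * |x| ^ α) := by
    nlinarith [key]
  have h := Real.log_nonneg hprod
  rw [Real.log_mul hpos1.ne' hpos2.ne'] at h
  linarith
end
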